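/- For every integer n ≥ 3 and every integer s ≥ 2, the maximum of the sequence (S_s(n,k))_{k=1}^{n} is attained at k = 2, and its value is S_s(n,2) = ((n-1)!)^s · H_{n-1}^{(s)}. -/

import Mathlib

/-- Stirling numbers of the first kind with level `s`. -/
def Slev (s : ℕ) : ℕ → ℕ → ℕ
  | 0, 0 => 1
  | 0, _ + 1 => 0
  | _ + 1, 0 => 0
  | n + 1, k + 1 => Slev s n k + n ^ s * Slev s n (k + 1)

/-- Generalized harmonic number of order `s`: `H_m^{(s)} = ∑_{ℓ=1}^m 1/ℓ^s`. -/
def genHarmonic (s m : ℕ) : ℚ := ∑ ℓ ∈ Finset.range m, 1 / ((ℓ : ℚ) + 1) ^ s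

lemma Slev_succ_succ (s n k : ℕ) :
    Slev s (n + 1) (k + 1) = Slev s n k + n ^ s * Slev s n (k + 1) := rfl

lemma Slev_zero_left (s n : ℕ) (hn : 1 ≤ n) : Slev s n 0 = 0 := by
  match n, hn with
  | n + 1, _ => rfl

lemma Slev_one_high (s k : ℕ) : Slev s 1 (k + 2) = 0 := by
  have h0 : Slev s 0 (k + 1) = 0 := rfl
  have h1 : Slev s 0 (k + 2) = 0 := rfl
  show Slev s 0 (k + 1) + 0 ^ s * Slev s 0 (k + 2) = 0
  rw [h0, h1]; simp

lemma Slev_one (s : ℕ) (n : ℕ) (hn : 1 ≤ n) :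
    Slev s n 1 = (Nat.factorial (n - 1)) ^ s := by
  induction n, hn using Nat.le_induction with
  | base => simp [Slev, Nat.factorial]
  | succ n hn ih =>
    rw [Slev_succ_succ, Slev_zero_left s n hn, ih]
    obtain ⟨m, rfl⟩ := Nat.exists_eq_add_of_le' hn
    simp [Nat.factorial, Nat.mul_pow]

lemma Slev_one_pos (s : ℕ) (n : ℕ) (hn : 1 ≤ n) : 0 < Slev s n 1 := by
  rw [Slev_one s n hn]
  exact Nat.pow_pos (Nat.factorial_pos _)

/-- Newton-type inequality: `k · S(n,k+1) · S(n,1) ≤ S(n,2) · S(n,k)`. -/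
lemma Slev_newton (s : ℕ) (n : ℕ) (hn : 1 ≤ n) :
    ∀ k, 1 ≤ k → k * Slev s n (k + 1) * Slev s n 1 ≤ Slev s n 2 * Slev s n k := by
  induction n, hn using Nat.le_induction with
  | base =>
    intro k hk
    obtain ⟨j, rfl⟩ := Nat.exists_eq_add_of_le' hk
    rw [Slev_one_high s j]
    simp
  | succ n hn ih =>
    intro k hk
    obtain ⟨j, rfl⟩ := Nat.exists_eq_add_of_le' hk
    -- k = j + 1
    rw [Slev_succ_succ s n (j + 1), Slev_succ_succ s n j, Slev_succ_succ s n 1,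
      Slev_succ_succ s n 0, Slev_zero_left s n hn]
    rcases Nat.eq_zero_or_pos j with rfl | hj
    · -- k = 1 case: equality after expansion
      rw [Slev_zero_left s n hn]
      ring_nf
      nlinarith [sq_nonneg (n ^ s)]
    · have h1 := ih (j + 1) (by omega)
      have h2 := ih j hj
      nlinarith [Nat.zero_le (Slev s n 2 * Slev s n j), Nat.zero_le (Slev s n 1 * Slev s n j),
        Nat.mul_le_mul_left (n ^ s * n ^ s) h1, Nat.mul_le_mul_left (n ^ s) h2]

/-- `(n-1) · S(n,2) ≤ (2(n-1)-1) · S(n,1)` for `n ≥ 2`, `s ≥ 2`. -/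
lemma Slev_two_bound (s : ℕ) (hs : 2 ≤ s) (n : ℕ) (hn : 2 ≤ n) :
    (n - 1) * Slev s n 2 ≤ (2 * (n - 1) - 1) * Slev s n 1 := by
  induction n, hn using Nat.le_induction with
  | base =>
    have h2 : Slev s 2 2 = 1 := by simp [Slev]
    have h1 : Slev s 2 1 = 1 := by simp [Slev]
    rw [h1, h2]
  | succ n hn ih =>
    obtain ⟨m, rfl⟩ := Nat.exists_eq_add_of_le' hn
    -- n = m + 2
    have hn1 : 1 ≤ m + 2 := by omega
    set F := Slev s (m + 2) 1 with hFdef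
    set H := Slev s (m + 2) 2 with hHdef
    rw [Slev_succ_succ s (m + 2) 1, Slev_succ_succ s (m + 2) 0, Slev_zero_left s (m + 2) hn1]
    have ih' : (m + 1) * H ≤ (2 * m + 1) * F := by
      have e2 : 2 * (m + 1) - 1 = 2 * m + 1 := by omega
      calc (m + 1) * H ≤ (2 * (m + 1) - 1) * F := ih
      _ = (2 * m + 1) * F := by rw [e2]
    have hns : (m + 2) * (m + 1) ≤ (m + 2) ^ s := by
      calc (m + 2) * (m + 1) ≤ (m + 2) * (m + 2) := Nat.mul_le_mul_left _ (by omega)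
      _ = (m + 2) ^ 2 := by ring
      _ ≤ (m + 2) ^ s := Nat.pow_le_pow_right (by omega) hs
    have e4 : 2 * (m + 2) - 1 = 2 * m + 3 := by omega
    simp only [Nat.add_sub_cancel]
    rw [e4]
    simp only [Nat.zero_add]
    show (m + 2) * (F + (m + 2) ^ s * H) ≤ (2 * m + 3) * ((m + 2) ^ s * F)
    have h1 : (m + 2) ^ s * ((m + 1) * H) ≤ (m + 2) ^ s * ((2 * m + 1) * F) :=
      Nat.mul_le_mul_left _ ih'
    have h2 : ((m + 2) * (m + 1)) * F ≤ (m + 2) ^ s * F := Nat.mul_le_mul_right F hns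
    have main : (m + 1) * ((m + 2) * (F + (m + 2) ^ s * (0 + H)))
        ≤ (m + 1) * ((2 * m + 3) * ((m + 2) ^ s * F)) := by nlinarith [h1, h2]
    have := Nat.le_of_mul_le_mul_left main (by omega : 0 < m + 1)
    simpa using this

lemma Slev_one_le_two (s : ℕ) (n : ℕ) (hn : 2 ≤ n) : Slev s n 1 ≤ Slev s n 2 := by
  induction n, hn using Nat.le_induction with
  | base =>
    have h2 : Slev s 2 2 = 1 := by simp [Slev]
    have h1 : Slev s 2 1 = 1 := by simp [Slev]
    rw [h1, h2]
  | succ n hn ih =>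
    have hn1 : 1 ≤ n := by omega
    rw [Slev_succ_succ s n 1, Slev_succ_succ s n 0, Slev_zero_left s n hn1]
    norm_num
    have := Nat.mul_le_mul_left (n ^ s) ih
    omega

lemma Slev_two_le_twice_one (s : ℕ) (hs : 2 ≤ s) (n : ℕ) (hn : 2 ≤ n) :
    Slev s n 2 ≤ 2 * Slev s n 1 := by
  have h := Slev_two_bound s hs n hn
  have h2 : (n - 1) * Slev s n 2 ≤ (n - 1) * (2 * Slev s n 1) := by
    calc (n - 1) * Slev s n 2 ≤ (2 * (n - 1) - 1) * Slev s n 1 := h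
    _ ≤ (2 * (n - 1)) * Slev s n 1 := Nat.mul_le_mul_right _ (by omega)
    _ = (n - 1) * (2 * Slev s n 1) := by ring
  exact Nat.le_of_mul_le_mul_left h2 (by omega)

lemma Slev_decreasing (s : ℕ) (hs : 2 ≤ s) (n : ℕ) (hn : 2 ≤ n) (k : ℕ) (hk : 2 ≤ k) :
    Slev s n (k + 1) ≤ Slev s n k := by
  have hF : 0 < Slev s n 1 := Slev_one_pos s n (by omega)
  have hN := Slev_newton s n (by omega) k (by omega)
  have h2 := Slev_two_le_twice_one s hs n hn
  have key : k * Slev s n (k + 1) * Slev s n 1 ≤ k * Slev s n k * Slev s n 1 := by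
    calc k * Slev s n (k + 1) * Slev s n 1 ≤ Slev s n 2 * Slev s n k := hN
    _ ≤ 2 * Slev s n 1 * Slev s n k := Nat.mul_le_mul_right _ h2
    _ ≤ k * Slev s n 1 * Slev s n k := Nat.mul_le_mul_right _ (Nat.mul_le_mul_right _ hk)
    _ = k * Slev s n k * Slev s n 1 := by ring
  have : Slev s n (k + 1) * (k * Slev s n 1) ≤ Slev s n k * (k * Slev s n 1) := by
    calc Slev s n (k + 1) * (k * Slev s n 1) = k * Slev s n (k + 1) * Slev s n 1 := by ring
    _ ≤ k * Slev s n k * Slev s n 1 := key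
    _ = Slev s n k * (k * Slev s n 1) := by ring
  exact Nat.le_of_mul_le_mul_right this (by positivity)

lemma Slev_le_two (s : ℕ) (hs : 2 ≤ s) (n : ℕ) (hn : 2 ≤ n) (k : ℕ) (hk : 2 ≤ k) :
    Slev s n k ≤ Slev s n 2 := by
  induction k with
  | zero => omega
  | succ k ih =>
    rcases Nat.lt_or_ge k 2 with h | h
    · interval_cases k
      · omega
      · exact le_rfl
    · exact le_trans (Slev_decreasing s hs n hn k h) (ih h)

lemma Slev_two_eq (s : ℕ) (n : ℕ) (hn : 1 ≤ n) :
    (Slev s n 2 : ℚ) = ((Nat.factorial (n - 1) : ℚ)) ^ s * genHarmonic s (n - 1) := by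
  induction n, hn using Nat.le_induction with
  | base =>
    have : Slev s 1 2 = 0 := Slev_one_high s 0
    simp [this, genHarmonic]
  | succ n hn ih =>
    obtain ⟨m, rfl⟩ := Nat.exists_eq_add_of_le' hn
    simp only [Nat.add_sub_cancel] at ih ⊢
    rw [Slev_succ_succ s (m + 1) 1]
    push_cast
    rw [ih, Slev_one s (m + 1) (by omega)]
    simp only [Nat.add_sub_cancel]
    have hgh : genHarmonic s (m + 1) = genHarmonic s m + 1 / ((m : ℚ) + 1) ^ s := by
      rw [genHarmonic, genHarmonic, Finset.sum_range_succ]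
    rw [hgh, Nat.factorial_succ]
    push_cast
    rw [mul_pow]
    have hm : ((m : ℚ) + 1) ^ s ≠ 0 := by positivity
    field_simp
    ring

theorem stmt_15 (s : ℕ) (hs : 2 ≤ s) (n : ℕ) (hn : 3 ≤ n) :
    (∀ k, 1 ≤ k → k ≤ n → Slev s n k ≤ Slev s n 2) ∧
      (Slev s n 2 : ℚ) = ((Nat.factorial (n - 1) : ℚ)) ^ s * genHarmonic s (n - 1) := by
  constructor
  · intro k hk1 hkn
    rcases Nat.lt_or_ge k 2 with h | h
    · have : k = 1 := by omega
      subst this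
      exact Slev_one_le_two s n (by omega)
    · exact Slev_le_two s hs n (by omega) k h
  · exact Slev_two_eq s n (by omega)
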